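/- arXiv:0707.0155 — 4 statements merged into one kernel-verified Lean document; each statement's English description precedes it below -/
import Mathlib

section
/- Let A_n be a cyclic group of order n generated by a, and let S ⊆ A_n \ {1} be closed under inverses. If the Cayley graph Cay(A_n,S) is balanced and both a and a^3 lie in S, then Cay(A_n,S) is the complete bipartite graph K_{n/2,n/2}; equivalently, S = A_n \ ⟨a^2⟩. -/
open SimpleGraph in
/-- A closed walk is an induced (chordless) cycle: it is a cycle and every edge of the
graph between vertices of the cycle is an edge of the cycle. -/
def IsInducedCycle {V : Type*} {G : SimpleGraph V} {v : V} (c : G.Walk v v) : Prop :=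
  c.IsCycle ∧ ∀ x ∈ c.support, ∀ y ∈ c.support, G.Adj x y → s(x, y) ∈ c.edges

/-- A graph is balanced: bipartite (2-colorable) and every induced cycle has length
divisible by 4 (equivalently, no induced cycle of length ≡ 2 mod 4). -/
def BalancedGraph {V : Type*} (G : SimpleGraph V) : Prop :=
  G.Colorable 2 ∧ ∀ (v : V) (c : G.Walk v v), IsInducedCycle c → 4 ∣ c.length
/-- The Cayley graph of a group `G` with connection set `S` (assumed symmetric and
not containing the identity in all statements): `g ~ h` iff `g * h⁻¹ ∈ S`. -/
def cayley {G : Type*} [Group G] (S : Set G) : SimpleGraph G where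
  Adj g h := g ≠ h ∧ (g * h⁻¹ ∈ S ∨ h * g⁻¹ ∈ S)
  symm := ⟨fun _ _ ⟨hne, hm⟩ => ⟨hne.symm, hm.symm⟩⟩
  loopless := ⟨fun _ h => h.1 rfl⟩

/-!
Since the Cayley graph is bipartite and `a ∈ S`, the colour of `a ^ k` depends only on the parity
of `k`, so no even power of `a` lies in `S`. Suppose some odd power is missing, let `m` be the
least positive odd exponent with `a ^ m ∉ S` (so `m ≥ 5`) and `M` the least odd exponent above `m`
with `a ^ M ∈ S`; it exists and `M < orderOf a` because `a ^ (orderOf a - (m - 2)) = a ^ -(m - 2)`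
lies in `S`. Any sequence `0 = F 0 < ⋯ < F Q = M` with odd steps below `m`, jumps of at least `m`
over three steps and `Q ≡ 1 (mod 4)` makes the powers `a ^ F i` an induced cycle of length
`Q + 1 ≡ 2 (mod 4)`: the only differences lying in `S` are single steps and `M` itself. Such a
sequence is the pointwise maximum of the sequence with steps `1, 1, m - 2, 1, 1, m - 2, …` and
the progression of difference `m - 2` ending at `M`.

So `S` is the complement of the index-two subgroup `⟨a²⟩`, and the Cayley graph joins exactly the
pairs of elements lying in different cosets.
-/

namespace SimpleGraph

theorem cycleGraph_adj_of_lt {n : ℕ} {u v : Fin n} (h : u < v) :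
    (cycleGraph n).Adj u v ↔ (v : ℕ) = u + 1 ∨ ((u : ℕ) = 0 ∧ (v : ℕ) + 1 = n) := by
  rw [cycleGraph_adj', Fin.coe_sub_iff_lt.mpr h, Fin.sub_val_of_le h.le]
  omega

theorem cycleGraph.mk_mem_edges_cycle_of_sub_eq_one {n : ℕ} {u v : Fin (n + 3)}
    (h : v - u = 1) : s(u, v) ∈ (cycleGraph.cycle n).edges := by
  have hv : (v : ℕ) = ((u : ℕ) + 1) % (n + 3) := by
    rw [sub_eq_iff_eq_add.mp h, Fin.val_add, add_comm]; simp
  rw [Walk.mk_mem_edges_iff_exists]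
  refine ⟨n + 2 - u, by simp; omega, ?_⟩
  rw [cycleGraph.getVert_cycle (by omega), cycleGraph.getVert_cycle (by omega), Sym2.eq_swap]
  congr 1 <;> ext
  · simp only [show n + 3 - (n + 2 - (u : ℕ) + 1) = u by omega, Nat.mod_eq_of_lt u.isLt]
  · rw [hv, show n + 3 - (n + 2 - (u : ℕ)) = u + 1 by omega]

theorem cycleGraph.mk_mem_edges_cycle {n : ℕ} {u v : Fin (n + 3)}
    (h : (cycleGraph (n + 3)).Adj u v) : s(u, v) ∈ (cycleGraph.cycle n).edges := by
  rcases h with h | h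
  · rw [Sym2.eq_swap]; exact mk_mem_edges_cycle_of_sub_eq_one h
  · exact mk_mem_edges_cycle_of_sub_eq_one h

end SimpleGraph

open SimpleGraph

theorem BalancedGraph.four_dvd_of_embedding {V : Type*} {G : SimpleGraph V}
    (hG : BalancedGraph G) {n : ℕ} (φ : cycleGraph (n + 3) ↪g G) : 4 ∣ n + 3 := by
  let c := (cycleGraph.cycle n).map φ.toHom
  have hc : IsInducedCycle c := by
    refine ⟨(Walk.isCycle_map_iff_of_injective φ.injective).mpr cycleGraph.isCycle_cycle, ?_⟩
    intro x hx y hy hxy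
    simp only [c, Walk.support_map, List.mem_map] at hx hy
    obtain ⟨u, -, rfl⟩ := hx
    obtain ⟨v, -, rfl⟩ := hy
    rw [Walk.edges_map]
    exact List.mem_map_of_mem (cycleGraph.mk_mem_edges_cycle (φ.map_adj_iff.mp hxy))
  simpa [c] using hG.2 _ c hc

theorem BalancedGraph.four_dvd_of_chordless {V : Type*} {G : SimpleGraph V}
    (hG : BalancedGraph G) {n : ℕ} (hn : 3 ≤ n) {f : Fin n → V} (hf : Function.Injective f)
    (hadj : ∀ u v : Fin n, u < v →
      (G.Adj (f u) (f v) ↔ (v : ℕ) = u + 1 ∨ ((u : ℕ) = 0 ∧ (v : ℕ) + 1 = n))) :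
    4 ∣ n := by
  obtain ⟨k, rfl⟩ : ∃ k, n = k + 3 := ⟨n - 3, by omega⟩
  refine hG.four_dvd_of_embedding ⟨⟨f, hf⟩, fun {u v} ↦ ?_⟩
  change G.Adj (f u) (f v) ↔ _
  rcases lt_trichotomy u v with h | rfl | h
  · rw [hadj u v h, cycleGraph_adj_of_lt h]
  · simp
  · rw [G.adj_comm, (cycleGraph _).adj_comm, hadj v u h, cycleGraph_adj_of_lt h]

structure IsGapSeq (m : ℤ) (F : ℕ → ℤ) : Prop where
  even_sub_self : ∀ i, Even (F i - i)
  one_le_sub_succ : ∀ i, 1 ≤ F (i + 1) - F i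
  sub_succ_le : ∀ i, F (i + 1) - F i ≤ m - 2
  le_sub_add_three : ∀ i, m ≤ F (i + 3) - F i

namespace IsGapSeq

variable {m : ℤ} {F : ℕ → ℤ}

theorem max {F' : ℕ → ℤ} (hF : IsGapSeq m F) (hF' : IsGapSeq m F') :
    IsGapSeq m fun i ↦ max (F i) (F' i) where
  even_sub_self i := by
    rcases max_choice (F i) (F' i) with h | h <;> rw [h]
    exacts [hF.even_sub_self i, hF'.even_sub_self i]
  one_le_sub_succ i := by
    have := hF.one_le_sub_succ i; have := hF'.one_le_sub_succ i; omega
  sub_succ_le i := by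
    have := hF.sub_succ_le i; have := hF'.sub_succ_le i; omega
  le_sub_add_three i := by
    have := hF.le_sub_add_three i; have := hF'.le_sub_add_three i; omega

theorem le_sub (hF : IsGapSeq m F) {i j : ℕ} (hij : i ≤ j) : (j - i : ℤ) ≤ F j - F i := by
  induction j, hij using Nat.le_induction with
  | base => simp
  | succ j _ ih => have := hF.one_le_sub_succ j; push_cast; omega

theorem strictMono (hF : IsGapSeq m F) : StrictMono F :=
  strictMono_nat_of_lt_succ fun i ↦ by have := hF.one_le_sub_succ i; omega

theorem le_sub_of_add_three_le (hF : IsGapSeq m F) {i j : ℕ} (hij : i + 3 ≤ j) :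
    m ≤ F j - F i := by
  have := hF.le_sub hij; have := hF.le_sub_add_three i; omega

theorem odd_sub_iff (hF : IsGapSeq m F) (i j : ℕ) : Odd (F j - F i) ↔ Odd ((j : ℤ) - i) := by
  have hi := hF.even_sub_self i
  have hj := hF.even_sub_self j
  rw [Int.even_sub] at hi hj
  rw [← Int.not_even_iff_odd, ← Int.not_even_iff_odd, Int.even_sub, Int.even_sub]
  tauto

theorem sub_mem_iff (hF : IsGapSeq m F) {D : Set ℤ} {M : ℤ} {Q : ℕ} (h0 : F 0 = 0)
    (hQ : F Q = M) (hsmall : ∀ k, Odd k → 0 < k → k < m → k ∈ D)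
    (hgap : ∀ k, Odd k → m ≤ k → k < M → k ∉ D) (hM : M ∈ D) (heven : ∀ k, Even k → k ∉ D)
    {i j : ℕ} (hij : i < j) (hjQ : j ≤ Q) :
    F j - F i ∈ D ↔ j = i + 1 ∨ (i = 0 ∧ j = Q) := by
  refine ⟨fun hD ↦ ?_, ?_⟩
  · by_contra hne
    have hodd : Odd (F j - F i) := Int.not_even_iff_odd.mp fun h ↦ heven _ h hD
    have h3 : i + 3 ≤ j := by
      rw [hF.odd_sub_iff, Int.odd_iff] at hodd
      omega
    have hi := hF.le_sub (Nat.zero_le i)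
    have hj := hF.le_sub hjQ
    refine hgap _ hodd (hF.le_sub_of_add_three_le h3) ?_ hD
    omega
  · rintro (rfl | ⟨rfl, rfl⟩)
    · refine hsmall _ ((hF.odd_sub_iff _ _).mpr ⟨0, by push_cast; ring⟩) ?_ ?_
      · have := hF.one_le_sub_succ i; omega
      · have := hF.sub_succ_le i; omega
    · rwa [h0, hQ, sub_zero]

end IsGapSeq

def lowGapSeq (m : ℤ) : ℕ → ℤ
  | 0 => 0
  | 1 => 1
  | 2 => 2
  | i + 3 => lowGapSeq m i + m

theorem lowGapSeq_sub_succ (m : ℤ) : ∀ i, lowGapSeq m (i + 1) - lowGapSeq m i = 1 ∨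
    lowGapSeq m (i + 1) - lowGapSeq m i = m - 2
  | 0 => by simp [lowGapSeq]
  | 1 => by simp [lowGapSeq]
  | 2 => by simp [lowGapSeq]
  | i + 3 => by simpa [lowGapSeq] using lowGapSeq_sub_succ m i

theorem even_lowGapSeq_sub_self {m : ℤ} (hm : Odd m) : ∀ i, Even (lowGapSeq m i - i)
  | 0 => by simp [lowGapSeq]
  | 1 => by simp [lowGapSeq]
  | 2 => by simp [lowGapSeq]
  | i + 3 => by
    have h : lowGapSeq m (i + 3) - ↑(i + 3) = (lowGapSeq m i - i) + (m - 3) := by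
      simp only [lowGapSeq]; push_cast; ring
    rw [h]
    exact (even_lowGapSeq_sub_self hm i).add (hm.sub_odd (by decide))

theorem isGapSeq_lowGapSeq {m : ℤ} (hm : Odd m) (hm3 : 3 ≤ m) : IsGapSeq m (lowGapSeq m) where
  even_sub_self := even_lowGapSeq_sub_self hm
  one_le_sub_succ i := by rcases lowGapSeq_sub_succ m i with h | h <;> omega
  sub_succ_le i := by rcases lowGapSeq_sub_succ m i with h | h <;> omega
  le_sub_add_three i := by simp [lowGapSeq]

theorem three_mul_lowGapSeq_le {m : ℤ} (hm3 : 3 ≤ m) : ∀ i, 3 * lowGapSeq m i ≤ m * i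
  | 0 => by simp [lowGapSeq]
  | 1 => by simp [lowGapSeq]; omega
  | 2 => by simp [lowGapSeq]; omega
  | i + 3 => by
    have := three_mul_lowGapSeq_le hm3 i
    simp only [lowGapSeq]; push_cast; linarith

theorem isGapSeq_linear {m c : ℤ} (hm : Odd m) (hm3 : 3 ≤ m) (hc : Even c) :
    IsGapSeq m fun i ↦ c + i * (m - 2) where
  even_sub_self i := by
    have h : c + i * (m - 2) - i = c + i * (m - 3) := by ring
    rw [h]
    exact hc.add ((hm.sub_odd (by decide)).mul_left _)
  one_le_sub_succ i := by push_cast; linarith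
  sub_succ_le i := by push_cast; linarith
  le_sub_add_three i := by push_cast; linarith

theorem exists_isGapSeq {m M : ℤ} (hm : Odd m) (hM : Odd M) (hm5 : 5 ≤ m) (hmM : m + 2 ≤ M) :
    ∃ t : ℕ, ∃ F, IsGapSeq m F ∧ F 0 = 0 ∧ F (4 * t + 5) = M := by
  classical
  have hex : ∃ t : ℕ, M ≤ (4 * t + 5) * (m - 2) :=
    ⟨M.toNat, by nlinarith [Int.self_le_toNat M]⟩
  -- The least `t` for which the progression of step `m - 2` ending at `M` starts at or below `0`;
  -- by minimality, `lowGapSeq` has not yet passed `M` at `4 * t + 5`.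
  set t := Nat.find hex
  have hhigh : M ≤ (4 * t + 5) * (m - 2) := Nat.find_spec hex
  have hlow : lowGapSeq m (4 * t + 5) ≤ M := by
    rcases Nat.eq_zero_or_eq_succ_pred t with h | h
    · rw [h]; simp [lowGapSeq]; omega
    · have hM' : (4 * t.pred + 5) * (m - 2) < M := not_le.mp (Nat.find_min hex (by omega))
      have := three_mul_lowGapSeq_le (by omega : 3 ≤ m) (4 * t + 5)
      rw [h] at this ⊢
      push_cast at this hM' ⊢
      nlinarith [mul_nonneg (Int.natCast_nonneg t.pred) (by omega : (0 : ℤ) ≤ m - 5)]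
  have hc : Even (M - (4 * t + 5) * (m - 2)) :=
    hM.sub_odd ((show Odd (4 * (t : ℤ) + 5) from ⟨2 * t + 2, by ring⟩).mul (hm.sub_even even_two))
  refine ⟨t, _, (isGapSeq_lowGapSeq hm (by omega)).max (isGapSeq_linear hm (by omega) hc), ?_, ?_⟩
  · simp [lowGapSeq]; linarith
  · push_cast; simp only [sub_add_cancel, max_eq_right hlow]

section Cayley

variable {G : Type*} [Group G] {S : Set G} {a : G}

theorem cayley_adj_iff (hid : (1 : G) ∉ S) (hinv : ∀ s ∈ S, s⁻¹ ∈ S) {g h : G} :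
    (cayley S).Adj g h ↔ h * g⁻¹ ∈ S := by
  refine ⟨fun ⟨_, hs⟩ ↦ hs.elim (by simpa using hinv _ ·) id, fun hs ↦ ⟨?_, Or.inr hs⟩⟩
  rintro rfl
  exact hid (by simpa using hs)

theorem zpow_neg_mem_iff (hinv : ∀ s ∈ S, s⁻¹ ∈ S) (z : ℤ) : a ^ (-z) ∈ S ↔ a ^ z ∈ S :=
  ⟨fun h ↦ by simpa using hinv _ h, fun h ↦ by simpa using hinv _ h⟩

theorem zpow_orderOf_add (a : G) (z : ℤ) : a ^ ((orderOf a : ℤ) + z) = a ^ z := by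
  rw [zpow_add, zpow_natCast, pow_orderOf_eq_one, one_mul]

theorem zpow_notMem_of_even (hC : (cayley S).Colorable 2) (hid : (1 : G) ∉ S) (ha : a ∈ S)
    {k : ℤ} (hk : Even k) : a ^ k ∉ S := by
  obtain ⟨C⟩ := hC
  have hstep (j : ℤ) : C (a ^ (j + 1)) ≠ C (a ^ j) := by
    refine C.valid ⟨fun h ↦ ?_, Or.inl ?_⟩
    · rw [zpow_add_one, mul_eq_left] at h
      exact hid (h ▸ ha)
    · rwa [add_comm, zpow_one_add, mul_inv_cancel_right]
  have hstep2 (j : ℤ) : C (a ^ (j + 2)) = C (a ^ j) := by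
    have h := hstep (j + 1)
    rw [add_assoc, one_add_one_eq_two] at h
    have hfin2 : ∀ x y z : Fin 2, x ≠ y → y ≠ z → x = z := by decide
    exact hfin2 _ _ _ h (hstep j)
  have hcol (j : ℤ) : C (a ^ (j + j)) = C 1 := by
    induction j using Int.induction_on with
    | zero => simp
    | succ j ih => rw [← ih, ← hstep2 (j + j)]; congr 2; ring
    | pred j ih => rw [← ih, ← hstep2 (-j - 1 + (-j - 1))]; congr 2; ring
  obtain ⟨j, rfl⟩ := hk
  intro hj
  exact C.valid ⟨fun h ↦ hid (by rwa [h] at hj), Or.inl (by simpa using hj)⟩ (hcol j)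

theorem even_orderOf (heven : ∀ k : ℤ, Even k → a ^ k ∉ S) (ha : a ∈ S) : Even (orderOf a) := by
  by_contra hodd
  refine heven ((orderOf a : ℤ) + 1) (by exact_mod_cast (Nat.not_even_iff_odd.mp hodd).add_one) ?_
  rwa [zpow_orderOf_add, zpow_one]

theorem not_balancedGraph_cayley_of_gap (hid : (1 : G) ∉ S) (hinv : ∀ s ∈ S, s⁻¹ ∈ S)
    {m M : ℤ} (hm : Odd m) (hM : Odd M) (hm5 : 5 ≤ m) (hmM : m + 2 ≤ M) (hMa : M < orderOf a)
    (hsmall : ∀ k, Odd k → 0 < k → k < m → a ^ k ∈ S)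
    (hgap : ∀ k, Odd k → m ≤ k → k < M → a ^ k ∉ S) (haM : a ^ M ∈ S)
    (heven : ∀ k : ℤ, Even k → a ^ k ∉ S) : ¬BalancedGraph (cayley S) := by
  intro hbal
  obtain ⟨t, F, hF, h0, hQ⟩ := exists_isGapSeq hm hM hm5 hmM
  have hbound : ∀ i ≤ 4 * t + 5, 0 ≤ F i ∧ F i ≤ M := fun i hi ↦
    ⟨h0 ▸ hF.strictMono.monotone (Nat.zero_le i), hQ ▸ hF.strictMono.monotone hi⟩
  have hinj : Function.Injective fun u : Fin (4 * t + 6) ↦ a ^ F u := by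
    intro u v huv
    have hu := hbound u (by omega)
    have hv := hbound v (by omega)
    have h := Int.eq_zero_of_abs_lt_dvd (orderOf_dvd_sub_iff_zpow_eq_zpow.mpr huv)
      (by rw [abs_lt]; omega)
    exact Fin.ext (hF.strictMono.injective (by omega))
  have h4 := hbal.four_dvd_of_chordless (by omega) hinj fun u v huv ↦ by
    have h := hF.sub_mem_iff (D := {k | a ^ k ∈ S}) h0 hQ hsmall hgap haM heven huv (by omega)
    rw [cayley_adj_iff hid hinv, ← zpow_sub]
    exact h.trans (by omega)
  omega

theorem exists_least_odd_zpow_notMem (hinv : ∀ s ∈ S, s⁻¹ ∈ S)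
    (heven : ∀ k : ℤ, Even k → a ^ k ∉ S) (hfin : IsOfFinOrder a) (ha : a ∈ S) (ha3 : a ^ 3 ∈ S)
    {k : ℤ} (hk : Odd k) (hkS : a ^ k ∉ S) :
    ∃ m : ℤ, Odd m ∧ 5 ≤ m ∧ 2 * m ≤ orderOf a ∧ a ^ m ∉ S ∧
      ∀ z, Odd z → 0 < z → z < m → a ^ z ∈ S := by
  obtain ⟨m, ⟨hm0, hm, hmS⟩, hmin⟩ := Int.exists_least_of_bdd
    (P := fun z ↦ 0 < z ∧ Odd z ∧ a ^ z ∉ S) ⟨0, fun z hz ↦ hz.1.le⟩ (by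
      rcases lt_or_gt_of_ne (show k ≠ 0 by rintro rfl; simp at hk) with h | h
      · exact ⟨-k, by omega, hk.neg, by rwa [zpow_neg_mem_iff hinv]⟩
      · exact ⟨k, h, hk, hkS⟩)
  have hn : 0 < (orderOf a : ℤ) := Int.natCast_pos.mpr hfin.orderOf_pos
  have hn2 := Int.even_iff.mp ((Int.even_coe_nat _).mpr (even_orderOf heven ha))
  rw [Int.odd_iff] at hm
  have h1 : m ≠ 1 := by rintro rfl; exact hmS (by simpa using ha)
  have h3 : m ≠ 3 := by rintro rfl; exact hmS (by simpa using ha3)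
  have hnm : m < orderOf a := by
    by_contra h
    have := hmin (m - orderOf a) ⟨by omega, Int.odd_iff.mpr (by omega), by
      rwa [← zpow_orderOf_add, add_sub_cancel]⟩
    omega
  have := hmin (orderOf a - m) ⟨by omega, Int.odd_iff.mpr (by omega), by
    rwa [sub_eq_add_neg, zpow_orderOf_add, zpow_neg_mem_iff hinv]⟩
  refine ⟨m, Int.odd_iff.mpr hm, by omega, by omega, hmS, fun z hz hz0 hzm ↦ ?_⟩
  by_contra h
  exact absurd (hmin z ⟨hz0, hz, h⟩) (by omega)

theorem zpow_mem_of_odd (hid : (1 : G) ∉ S) (hinv : ∀ s ∈ S, s⁻¹ ∈ S)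
    (hbal : BalancedGraph (cayley S)) (hfin : IsOfFinOrder a) (ha : a ∈ S) (ha3 : a ^ 3 ∈ S)
    {k : ℤ} (hk : Odd k) : a ^ k ∈ S := by
  have heven (k : ℤ) (hk : Even k) : a ^ k ∉ S := zpow_notMem_of_even hbal.1 hid ha hk
  by_contra hkS
  obtain ⟨m, hm, hm5, hmn, hmS, hsmall⟩ :=
    exists_least_odd_zpow_notMem hinv heven hfin ha ha3 hk hkS
  have hm' := Int.odd_iff.mp hm
  have hwit : m < orderOf a - (m - 2) ∧ Odd ((orderOf a : ℤ) - (m - 2)) ∧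
      a ^ ((orderOf a : ℤ) - (m - 2)) ∈ S := by
    have hn2 := Int.even_iff.mp ((Int.even_coe_nat _).mpr (even_orderOf heven ha))
    refine ⟨by omega, Int.odd_iff.mpr (by omega), ?_⟩
    rw [sub_eq_add_neg, zpow_orderOf_add, zpow_neg_mem_iff hinv]
    exact hsmall _ (Int.odd_iff.mpr (by omega)) (by omega) (by omega)
  obtain ⟨M, ⟨hmM, hM, hMS⟩, hMmin⟩ := Int.exists_least_of_bdd
    (P := fun z ↦ m < z ∧ Odd z ∧ a ^ z ∈ S) ⟨m, fun z hz ↦ hz.1.le⟩ ⟨_, hwit⟩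
  have hMn := hMmin _ hwit
  refine not_balancedGraph_cayley_of_gap hid hinv hm hM hm5
    (by rw [Int.odd_iff] at hM; omega) (by omega) hsmall ?_ hMS heven hbal
  intro z hz hmz hzM hzS
  rcases hmz.eq_or_lt with rfl | hmz
  · exact hmS hzS
  · exact absurd (hMmin z ⟨hmz, hz, hzS⟩) (by omega)

end Cayley

section Bipartite

variable {G : Type*} [Group G]

theorem cayley_compl_adj_iff {H : Subgroup G} (hH : H.index = 2) {x y : G} :
    (cayley (H : Set G)ᶜ).Adj x y ↔ ¬(x ∈ H ↔ y ∈ H) := by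
  have hmem : x * y⁻¹ ∈ H ↔ (x ∈ H ↔ y ∈ H) := by
    rw [Subgroup.mul_mem_iff_of_index_two hH, inv_mem_iff]
  have hmem' : y * x⁻¹ ∈ H ↔ (x ∈ H ↔ y ∈ H) := by
    rw [Subgroup.mul_mem_iff_of_index_two hH, inv_mem_iff, iff_comm (a := x ∈ H)]
  simp only [cayley, Set.mem_compl_iff, SetLike.mem_coe, hmem, hmem']
  constructor
  · exact fun h ↦ h.2.elim id id
  · intro h
    exact ⟨by rintro rfl; exact h Iff.rfl, Or.inl h⟩

theorem nonempty_cayley_compl_iso_completeBipartiteGraph [Fintype G] {H : Subgroup G}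
    (hH : H.index = 2) :
    Nonempty (cayley (H : Set G)ᶜ ≃g
      completeBipartiteGraph (Fin (Fintype.card G / 2)) (Fin (Fintype.card G / 2))) := by
  classical
  have hcard : Fintype.card H * 2 = Fintype.card G := by
    simpa [hH, Nat.card_eq_fintype_card] using H.card_mul_index
  have e₁ : (H : Set G) ≃ Fin (Fintype.card G / 2) := Fintype.equivFinOfCardEq (by
    simp only [SetLike.coe_sort_coe]; omega)
  have e₂ : ((H : Set G)ᶜ : Set G) ≃ Fin (Fintype.card G / 2) := Fintype.equivFinOfCardEq (by
    rw [Fintype.card_compl_set]; simp only [SetLike.coe_sort_coe]; omega)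
  refine ⟨⟨(Equiv.Set.sumCompl (H : Set G)).symm.trans (e₁.sumCongr e₂), fun {x y} ↦ ?_⟩⟩
  rw [cayley_compl_adj_iff hH]
  have hside (z : G) :
      (e₁.sumCongr e₂ ((Equiv.Set.sumCompl (H : Set G)).symm z)).isLeft ↔ z ∈ H := by
    by_cases hz : z ∈ H
    · simp [Equiv.Set.sumCompl_symm_apply_of_mem (s := (H : Set G)) hz, hz]
    · simp [Equiv.Set.sumCompl_symm_apply_of_notMem (s := (H : Set G)) hz, hz]
  simp only [Equiv.trans_apply, completeBipartiteGraph_adj, ← Sum.not_isLeft, hside]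
  tauto

end Bipartite

section Cyclic

variable {G : Type*} [Group G] {S : Set G} {a : G}

theorem mem_zpowers_sq_iff_notMem (hgen : ∀ g : G, g ∈ Subgroup.zpowers a)
    (hS : ∀ k : ℤ, a ^ k ∈ S ↔ Odd k) (g : G) : g ∈ Subgroup.zpowers (a ^ 2) ↔ g ∉ S := by
  obtain ⟨k, rfl⟩ := Subgroup.mem_zpowers_iff.mp (hgen g)
  rw [hS, Int.not_odd_iff_even, Subgroup.mem_zpowers_iff]
  constructor
  · rintro ⟨j, hj⟩
    have h : a ^ (2 * j) = a ^ k := by rw [← hj, zpow_mul]; norm_cast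
    rw [← Int.not_odd_iff_even, ← hS, ← h, hS]
    exact Int.not_odd_iff_even.mpr (even_two_mul j)
  · rintro ⟨j, rfl⟩
    exact ⟨j, by rw [← two_mul, zpow_mul]; norm_cast⟩

theorem index_zpowers_sq (hgen : ∀ g : G, g ∈ Subgroup.zpowers a)
    (hS : ∀ k : ℤ, a ^ k ∈ S ↔ Odd k) : (Subgroup.zpowers (a ^ 2)).index = 2 := by
  refine Subgroup.index_eq_two_iff.mpr ⟨a, fun b ↦ ?_⟩
  obtain ⟨k, rfl⟩ := Subgroup.mem_zpowers_iff.mp (hgen b)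
  rw [← zpow_add_one, mem_zpowers_sq_iff_notMem hgen hS, mem_zpowers_sq_iff_notMem hgen hS, hS, hS,
    odd_add_one, Int.not_even_iff_odd, xor_not_right]

end Cyclic

/-- if `Cay(A_n,S)` is balanced and `a, a³ ∈ S` (for a generator `a`),
then `S = A_n \ ⟨a²⟩`, i.e. the graph is the complete bipartite graph `K_{n/2,n/2}`. -/
theorem balanced_cayley_with_a_a3 {G : Type*} [Group G] [Fintype G] (n : ℕ) (a : G)
    (hcard : Fintype.card G = n) (hgen : ∀ g : G, g ∈ Subgroup.zpowers a)
    (S : Set G) (hid : (1 : G) ∉ S) (hinv : ∀ s ∈ S, s⁻¹ ∈ S)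
    (hbal : BalancedGraph (cayley S)) (ha : a ∈ S) (ha3 : a ^ 3 ∈ S) :
    S = (↑(Subgroup.zpowers (a ^ 2)) : Set G)ᶜ ∧
      Nonempty (cayley S ≃g completeBipartiteGraph (Fin (n / 2)) (Fin (n / 2))) := by
  have hS (k : ℤ) : a ^ k ∈ S ↔ Odd k :=
    ⟨fun h ↦ Int.not_even_iff_odd.mp fun he ↦ zpow_notMem_of_even hbal.1 hid ha he h,
      zpow_mem_of_odd hid hinv hbal (isOfFinOrder_of_finite a) ha ha3⟩
  have hSH : S = (Subgroup.zpowers (a ^ 2) : Set G)ᶜ :=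
    Set.ext fun g ↦ (iff_not_comm.mp (mem_zpowers_sq_iff_notMem hgen hS g))
  refine ⟨hSH, ?_⟩
  rw [hSH, ← hcard]
  exact nonempty_cayley_compl_iso_completeBipartiteGraph (index_zpowers_sq hgen hS)
end

section
/- Let X be a bipartite graph with distinct vertices u, v having identical neighborhoods (non-trivial twins). Then X is balanced if and only if the induced subgraph X \ u obtained by deleting u is balanced. -/
/-!
Every induced subgraph of a balanced graph is balanced, since an induced cycle stays induced
under an induced embedding. Conversely, let `c` be an induced cycle of `X`. If `c` avoids `u` it
lives in `X \ u`. If it passes through `u` but not `v`, the automorphism of `X` exchanging the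
twins moves it onto an induced cycle of the same length avoiding `u`. If it passes through both,
then `v` is adjacent to the two cycle neighbours `a`, `b` of `u`; as `c` has no chords, both
`a v` and `v b` are edges of `c`, so `c` is the 4-cycle `u a v b`.
-/

open SimpleGraph Walk

section

variable {V W : Type*} {G : SimpleGraph V} {G' : SimpleGraph W}

namespace SimpleGraph

theorem Walk.IsCycle.eq_getVert_two {u v : V} {c : G.Walk u u} (hc : c.IsCycle)
    (hvu : v ≠ u) (h : s(c.snd, v) ∈ c.edges) : v = c.getVert 2 := by
  cases c with
  | nil => exact absurd hc not_isCycle_nil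
  | cons hadj p =>
    simp only [snd_cons, edges_cons, List.mem_cons] at h
    rcases h with h | h
    · simp_all
    · simpa using ((cons_isCycle_iff p hadj).1 hc).1.eq_snd_of_mem_edges h

theorem adj_swap_left_of_neighborSet_eq [DecidableEq V] {u v a b : V}
    (htwin : G.neighborSet u = G.neighborSet v) (h : G.Adj a b) :
    G.Adj (Equiv.swap u v a) b := by
  rcases eq_or_ne a u with rfl | hau
  · rw [Equiv.swap_apply_left]
    exact show b ∈ G.neighborSet v from htwin ▸ h
  rcases eq_or_ne a v with rfl | hav
  · rw [Equiv.swap_apply_right]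
    exact show b ∈ G.neighborSet u from htwin ▸ h
  rwa [Equiv.swap_apply_of_ne_of_ne hau hav]

def Iso.swapOfNeighborSetEq [DecidableEq V] {u v : V}
    (htwin : G.neighborSet u = G.neighborSet v) : G ≃g G :=
  have hom {a b : V} (h : G.Adj a b) : G.Adj (Equiv.swap u v a) (Equiv.swap u v b) :=
    (adj_swap_left_of_neighborSet_eq htwin (adj_swap_left_of_neighborSet_eq htwin h).symm).symm
  { Equiv.swap u v with map_rel_iff' := ⟨fun h => by simpa using hom h, hom⟩ }

@[simp]
theorem Iso.swapOfNeighborSetEq_apply [DecidableEq V] {u v : V}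
    (htwin : G.neighborSet u = G.neighborSet v) (a : V) :
    Iso.swapOfNeighborSetEq htwin a = Equiv.swap u v a :=
  rfl

end SimpleGraph

theorem isInducedCycle_map_iff (f : G ↪g G') {v : V} {c : G.Walk v v} :
    IsInducedCycle (c.map f.toHom) ↔ IsInducedCycle c := by
  refine and_congr (isCycle_map_iff_of_injective f.injective) ⟨fun h x hx y hy hxy => ?_, ?_⟩
  · have hmem := h (f x) (by simpa using hx) (f y) (by simpa using hy) (f.map_adj_iff.2 hxy)
    rw [edges_map, List.mem_map] at hmem
    obtain ⟨e, he, hfe⟩ := hmem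
    rwa [← Sym2.map.injective f.injective (hfe.trans (Sym2.map_mk f x y).symm)]
  · intro h x hx y hy hxy
    rw [Walk.support_map, List.mem_map] at hx hy
    obtain ⟨x, hx, rfl⟩ := hx
    obtain ⟨y, hy, rfl⟩ := hy
    rw [edges_map]
    exact List.mem_map.2 ⟨s(x, y), h x hx y hy (f.map_adj_iff.1 hxy), rfl⟩

theorem IsInducedCycle.rotate [DecidableEq V] {u v : V} {c : G.Walk v v} (hc : IsInducedCycle c)
    (hu : u ∈ c.support) : IsInducedCycle (c.rotate u hu) :=
  ⟨hc.1.rotate hu, fun x hx y hy hxy => (c.rotate_edges u hu).perm.mem_iff.2 <|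
    hc.2 x ((c.mem_support_rotate_iff u hu).1 hx) y ((c.mem_support_rotate_iff u hu).1 hy) hxy⟩

theorem IsInducedCycle.length_eq_four_of_twin {u v : V} {c : G.Walk u u} (hc : IsInducedCycle c)
    (huv : u ≠ v) (htwin : G.neighborSet u = G.neighborSet v) (hv : v ∈ c.support) :
    c.length = 4 := by
  have hnil := hc.1.not_nil
  have twin {x : V} (hx : G.Adj u x) : G.Adj v x := show x ∈ G.neighborSet v from htwin ▸ hx
  have h2 : v = c.getVert 2 := hc.1.eq_getVert_two huv.symm <|
    hc.2 _ (c.getVert_mem_support 1) _ hv (twin (c.adj_snd hnil)).symm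
  have h2' : v = c.getVert (c.length - 2) := by
    have hpen : s(c.reverse.snd, v) ∈ c.reverse.edges := by
      rw [snd_reverse, edges_reverse, List.mem_reverse]
      exact hc.2 _ (c.getVert_mem_support _) _ hv (twin (c.adj_penultimate hnil).symm).symm
    simpa [getVert_reverse] using hc.1.reverse.eq_getVert_two huv.symm hpen
  have := hc.1.three_le_length
  have := hc.1.getVert_injOn (by simp; omega) (by simp; omega) (h2.symm.trans h2')
  omega

theorem BalancedGraph.comap (f : G ↪g G') (h : BalancedGraph G') : BalancedGraph G :=
  ⟨h.1.of_hom f.toHom, fun v c hc => by simpa using h.2 _ _ ((isInducedCycle_map_iff f).2 hc)⟩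

theorem BalancedGraph.four_dvd_length_of_support_subset {s : Set V}
    (h : BalancedGraph (G.induce s)) {v : V} {c : G.Walk v v} (hc : IsInducedCycle c)
    (hs : ∀ x ∈ c.support, x ∈ s) : 4 ∣ c.length := by
  have hlift := (isInducedCycle_map_iff (Embedding.induce s)).1 ((c.map_induce hs).symm ▸ hc)
  have hlen : (c.induce s hs).length = c.length := by
    rw [← length_map (Embedding.induce s).toHom, c.map_induce hs]
    rfl
  exact hlen ▸ h.2 _ _ hlift

end

/-- deleting one of a pair of non-trivial twins preserves/reflects balancedness. -/
theorem balanced_iff_delete_twin {V : Type*} (G : SimpleGraph V)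
    (hbip : G.Colorable 2) (u v : V) (huv : u ≠ v)
    (htwin : G.neighborSet u = G.neighborSet v) :
    BalancedGraph G ↔ BalancedGraph (G.induce {w | w ≠ u}) := by
  classical
  refine ⟨BalancedGraph.comap (Embedding.induce _), fun h => ⟨hbip, fun w c hc => ?_⟩⟩
  by_cases hu : u ∈ c.support
  · by_cases hv : v ∈ c.support
    · rw [← c.length_rotate u hu,
        (hc.rotate hu).length_eq_four_of_twin huv htwin ((c.mem_support_rotate_iff u hu).2 hv)]
    · let σ := Iso.swapOfNeighborSetEq htwin
      have hσc : IsInducedCycle (c.map σ.toEmbedding.toHom) := (isInducedCycle_map_iff _).2 hc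
      have hσu : ∀ x ∈ (c.map σ.toEmbedding.toHom).support, x ≠ u := by
        simp only [Walk.support_map, List.mem_map]
        rintro _ ⟨a, ha, rfl⟩ hau
        have hav : a = v := by simpa [σ, Equiv.swap_apply_eq_iff] using hau
        exact hv (hav ▸ ha)
      simpa using h.four_dvd_length_of_support_subset hσc hσu
  · exact h.four_dvd_length_of_support_subset hc fun x hx hxu => hu (hxu ▸ hx)
end

section
/- Let l, t be positive integers with l = 2 or (l ≡ 0 mod 4 and l ≥ 8). Let A_{lt} be cyclic of order lt with generator a and S = {a^{il±1} : 0 ≤ i ≤ t−1}. Then Cay(A_{lt}, S) is isomorphic to the lexicographic product of the cycle C_l with the empty graph on t vertices (an (l,t)-cycle). -/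
/-- The lexicographic product of graphs. -/
def lexProd {α β : Type*} (X : SimpleGraph α) (Y : SimpleGraph β) : SimpleGraph (α × β) where
  Adj p q := X.Adj p.1 q.1 ∨ (p.1 = q.1 ∧ Y.Adj p.2 q.2)
  symm := by
    refine ⟨?_⟩
    rintro p q (h | ⟨h1, h2⟩)
    · exact Or.inl h.symm
    · exact Or.inr ⟨h1.symm, h2.symm⟩
  loopless := by
    refine ⟨?_⟩
    rintro p (h | ⟨_, h2⟩)
    · exact X.irrefl h
    · exact Y.irrefl h2

/-- The `(l,t)`-cycle: lexicographic product of the cycle `C_l` with the edgeless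
graph on `t` vertices. -/
def ltCycle (l t : ℕ) : SimpleGraph (Fin l × Fin t) :=
  lexProd (SimpleGraph.cycleGraph l) (⊥ : SimpleGraph (Fin t))

/-!
Every element of `G` is uniquely `a ^ (x + l * y)` with `x < l` and `y < t`, which identifies `G`
with `Fin l × Fin t`. Since `a` has order `l * t`, the powers `a ^ (i * l)` with `i < t` are exactly
the `a ^ k` with `l ∣ k`, so the connection set consists of the `a ^ k` with `k ≡ ±1 (mod l)`.
Hence `a ^ (x + l * y)` and `a ^ (x' + l * y')` are adjacent iff `x - x' ≡ ±1 (mod l)`, which is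
adjacency of `x` and `x'` in `C_l`, i.e. adjacency in the `(l, t)`-cycle.
-/

open SimpleGraph

section
variable {G : Type*} [Group G] {a : G} {l t : ℕ}

def ltConnSet (a : G) (l t : ℕ) : Set G :=
  {x | ∃ i < t, x = a ^ (i * l) * a ∨ x = a ^ (i * l) * a⁻¹}

theorem exists_zpow_eq_pow_mul_iff (ha : orderOf a = l * t) (ht : 0 < t) (k : ℤ) :
    (∃ i < t, a ^ k = a ^ (i * l)) ↔ (k : ZMod l) = 0 := by
  rw [ZMod.intCast_zmod_eq_zero_iff_dvd]
  constructor
  · rintro ⟨i, -, h⟩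
    rw [← zpow_natCast, zpow_eq_zpow_iff_modEq, ha] at h
    have hdvd : (l : ℤ) ∣ (i * l : ℕ) - k := (Dvd.intro _ (Nat.cast_mul l t).symm).trans h.dvd
    simpa using dvd_sub (dvd_mul_left (l : ℤ) i) hdvd
  · rintro ⟨q, rfl⟩
    have ht' : (0 : ℤ) < t := by exact_mod_cast ht
    have hnonneg : 0 ≤ q % t := Int.emod_nonneg q ht'.ne'
    have hlt : q % t < t := Int.emod_lt_of_pos q ht'
    refine ⟨(q % t).toNat, by omega, ?_⟩
    rw [← zpow_natCast, zpow_eq_zpow_iff_modEq, ha]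
    push_cast
    rw [Int.toNat_of_nonneg hnonneg, mul_comm _ (l : ℤ)]
    exact ((Int.mod_modEq q t).symm).mul_left'

theorem zpow_mem_ltConnSet_iff (ha : orderOf a = l * t) (ht : 0 < t) (k : ℤ) :
    a ^ k ∈ ltConnSet a l t ↔ (k : ZMod l) = 1 ∨ (k : ZMod l) = -1 := by
  have hplus (i : ℕ) : a ^ k = a ^ (i * l) * a ↔ a ^ (k - 1) = a ^ (i * l) := by
    rw [zpow_sub_one, mul_inv_eq_iff_eq_mul]
  have hminus (i : ℕ) : a ^ k = a ^ (i * l) * a⁻¹ ↔ a ^ (k + 1) = a ^ (i * l) := by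
    rw [zpow_add_one, eq_mul_inv_iff_mul_eq]
  simp only [ltConnSet, Set.mem_ofPred_eq, hplus, hminus, and_or_left, exists_or]
  rw [exists_zpow_eq_pow_mul_iff ha ht, exists_zpow_eq_pow_mul_iff ha ht]
  push_cast
  rw [sub_eq_zero, add_eq_zero_iff_eq_neg]

theorem cayley_ltConnSet_adj_zpow_iff (hl : 2 ≤ l) (ha : orderOf a = l * t) (ht : 0 < t)
    (m n : ℤ) : (cayley (ltConnSet a l t)).Adj (a ^ m) (a ^ n) ↔
      ((m - n : ℤ) : ZMod l) = 1 ∨ ((m - n : ℤ) : ZMod l) = -1 := by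
  have hmem (m n : ℤ) : a ^ m * (a ^ n)⁻¹ ∈ ltConnSet a l t ↔
      ((m - n : ℤ) : ZMod l) = 1 ∨ ((m - n : ℤ) : ZMod l) = -1 := by
    rw [← zpow_sub, zpow_mem_ltConnSet_iff ha ht]
  have hne : ((m - n : ℤ) : ZMod l) = 1 ∨ ((m - n : ℤ) : ZMod l) = -1 → a ^ m ≠ a ^ n := by
    have : Fact (1 < l) := ⟨hl⟩
    intro h heq
    have h0 : ((m - n : ℤ) : ZMod l) = 0 :=
      (exists_zpow_eq_pow_mul_iff ha ht _).mp ⟨0, ht, by simp [zpow_sub, heq]⟩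
    rcases h with h | h <;> simp [h] at h0
  have hswap : ((n - m : ℤ) : ZMod l) = 1 ∨ ((n - m : ℤ) : ZMod l) = -1 ↔
      ((m - n : ℤ) : ZMod l) = 1 ∨ ((m - n : ℤ) : ZMod l) = -1 := by
    rw [← neg_sub m n, Int.cast_neg, neg_eq_iff_eq_neg, neg_inj, or_comm]
  show a ^ m ≠ a ^ n ∧ (_ ∨ _) ↔ _
  rw [hmem, hmem, hswap, or_self]
  exact ⟨And.right, fun h => ⟨hne h, h⟩⟩

theorem injective_pow_add_mul (ha : orderOf a = l * t) :
    Function.Injective fun p : Fin l × Fin t => a ^ ((p.1 : ℕ) + l * p.2) := by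
  let e : Fin l × Fin t ≃ Fin (t * l) := (Equiv.prodComm _ _).trans finProdFinEquiv
  have he (p : Fin l × Fin t) : ((e p : Fin (t * l)) : ℕ) = p.1 + l * p.2 := by simp [e]
  have hlt (p : Fin l × Fin t) : (p.1 : ℕ) + l * p.2 < orderOf a := by
    rw [← he, ha, mul_comm l t]; exact (e p).isLt
  intro p q h
  exact e.injective (Fin.ext (by rw [he, he]; exact pow_injOn_Iio_orderOf (hlt p) (hlt q) h))

end

theorem cycleGraph_adj_iff_intCast {l : ℕ} (hl : 2 ≤ l) {u v : Fin l} :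
    (cycleGraph l).Adj u v ↔
      (((u : ℤ) - v : ℤ) : ZMod l) = 1 ∨ (((u : ℤ) - v : ℤ) : ZMod l) = -1 := by
  obtain ⟨n, rfl⟩ : ∃ n, l = n + 2 := ⟨l - 2, by omega⟩
  have hval (x y : ZMod (n + 2)) : (((x.val : ℤ) - y.val : ℤ) : ZMod (n + 2)) = x - y := by
    push_cast; simp
  have hsymm (x y : ZMod (n + 2)) : (x - y = 1 ∨ y - x = 1) ↔ (x - y = 1 ∨ x - y = -1) := by
    rw [← neg_sub x y, neg_eq_iff_eq_neg]
  -- `Fin (n + 2)` and `ZMod (n + 2)` coincide definitionally, ring structure included.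
  erw [hval u v]
  exact hsymm u v

theorem ltCycle_adj_iff {l t : ℕ} {p q : Fin l × Fin t} :
    (ltCycle l t).Adj p q ↔ (cycleGraph l).Adj p.1 q.1 := by
  simp [ltCycle, lexProd]

/-- `Cay(A_{lt}, {a^{il±1} : 0 ≤ i ≤ t-1})` is isomorphic to the `(l,t)`-cycle. -/
theorem cayley_iso_ltCycle {G : Type*} [Group G] [Fintype G] (l t : ℕ)
    (hl : l = 2 ∨ (l % 4 = 0 ∧ 8 ≤ l)) (ht : 0 < t) (a : G)
    (hcard : Fintype.card G = l * t) (hgen : ∀ g : G, g ∈ Subgroup.zpowers a)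
    (S : Set G) (hS : S = {x : G | ∃ i < t, x = a ^ (i * l) * a ∨ x = a ^ (i * l) * a⁻¹}) :
    Nonempty (cayley S ≃g ltCycle l t) := by
  have hl2 : 2 ≤ l := by omega
  have ha : orderOf a = l * t := by
    rw [orderOf_eq_card_of_forall_mem_zpowers hgen, Nat.card_eq_fintype_card, hcard]
  let f (p : Fin l × Fin t) : G := a ^ ((p.1 : ℕ) + l * p.2)
  have hf : Function.Bijective f :=
    (Fintype.bijective_iff_injective_and_card f).mpr ⟨injective_pow_add_mul ha, by simp [hcard]⟩
  refine ⟨Iso.symm ⟨Equiv.ofBijective f hf, fun {p q} => ?_⟩⟩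
  subst hS
  show (cayley (ltConnSet a l t)).Adj (f p) (f q) ↔ _
  simp only [f, ← zpow_natCast]
  rw [cayley_ltConnSet_adj_zpow_iff hl2 ha ht, ltCycle_adj_iff, cycleGraph_adj_iff_intCast hl2]
  push_cast
  simp only [ZMod.natCast_self, zero_mul, add_zero]
end

section
/- Every cubic bipartite graph containing two distinct vertices with identical neighborhoods is non-planar. -/
/-- `H` is a minor of `G`: there are disjoint nonempty connected branch sets in `G`,
one for each vertex of `H`, with edges of `G` joining branch sets of adjacent vertices. -/
def HasMinor {α β : Type*} (G : SimpleGraph α) (H : SimpleGraph β) : Prop :=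
  ∃ B : β → Set α, (∀ b, (B b).Nonempty) ∧ (∀ b, (G.induce (B b)).Connected) ∧
    (Pairwise fun b b' => Disjoint (B b) (B b')) ∧
    ∀ b b', H.Adj b b' → ∃ u ∈ B b, ∃ v ∈ B b', G.Adj u v

/-- Planarity, via Wagner's characterisation: no `K₅` and no `K_{3,3}` minor. -/
def PlanarG {α : Type*} (G : SimpleGraph α) : Prop :=
  ¬ HasMinor G (SimpleGraph.completeGraph (Fin 5)) ∧ ¬ HasMinor G (completeBipartiteGraph (Fin 3) (Fin 3))

/-!
Let `N` be the common neighbourhood of the twins `u` and `v`. Every `a ∈ N` has exactly one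
neighbour outside `{u, v}`, and by bipartiteness it lies outside `N`. Let `W` be the component of
`G - ({u, v} ∪ N)` containing the outer neighbour of some `a ∈ N`. The vertices of `W` of the
colour of `u` have all their outside neighbours in `N`, the others have none, so counting the edges
at both colour classes of `W` shows that the number of edges between `W` and `N` is divisible
by `3`. It lies between `1` and `3`, so every vertex of `N` has a neighbour in `W`, and the branch
sets `{u}`, `{v}`, `W` against the three singletons of `N` form a `K_{3,3}` minor.
-/

open SimpleGraph Finset

theorem Finset.eq_one_of_card_dvd_sum {ι : Type*} {s : Finset ι} {f : ι → ℕ}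
    (hle : ∀ i ∈ s, f i ≤ 1) (hdvd : #s ∣ ∑ i ∈ s, f i) {j : ι} (hj : j ∈ s) (hfj : f j ≠ 0) :
    ∀ i ∈ s, f i = 1 := by
  have hsum_le : ∑ i ∈ s, f i ≤ ∑ i ∈ s, 1 := sum_le_sum hle
  have hsum_pos : 0 < ∑ i ∈ s, f i :=
    (Nat.pos_of_ne_zero hfj).trans_le (single_le_sum (by simp) hj)
  rw [sum_const, smul_eq_mul, mul_one] at hsum_le
  refine (sum_eq_sum_iff_of_le hle).mp ?_
  rw [sum_const, smul_eq_mul, mul_one]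
  exact le_antisymm hsum_le (Nat.le_of_dvd hsum_pos hdvd)

namespace SimpleGraph

variable {V : Type*} (G : SimpleGraph V)

def componentAvoiding (S : Set V) (x : V) : Set V :=
  {w | ∃ p : G.Walk x w, ∀ y ∈ p.support, y ∉ S}

variable {G} {S : Set V} {x : V}

lemma mem_componentAvoiding_self (hx : x ∉ S) : x ∈ G.componentAvoiding S x :=
  ⟨.nil, by simpa using hx⟩

lemma notMem_of_mem_componentAvoiding {w : V} (hw : w ∈ G.componentAvoiding S x) : w ∉ S := by
  obtain ⟨p, hp⟩ := hw
  exact hp w p.end_mem_support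

lemma mem_componentAvoiding_of_adj {w z : V} (hw : w ∈ G.componentAvoiding S x)
    (hwz : G.Adj w z) (hz : z ∉ S) : z ∈ G.componentAvoiding S x := by
  obtain ⟨p, hp⟩ := hw
  refine ⟨p.concat hwz, fun y hy => ?_⟩
  rw [Walk.support_concat, List.mem_append, List.mem_singleton] at hy
  rcases hy with hy | rfl
  exacts [hp y hy, hz]

lemma connected_induce_componentAvoiding (hx : x ∉ S) :
    (G.induce (G.componentAvoiding S x)).Connected := by
  classical
  rw [connected_iff_exists_forall_reachable]
  refine ⟨⟨x, mem_componentAvoiding_self hx⟩, ?_⟩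
  rintro ⟨w, p, hp⟩
  have hsupp : ∀ y ∈ p.support, y ∈ G.componentAvoiding S x := fun y hy =>
    ⟨p.takeUntil y hy, fun z hz => hp z (p.support_takeUntil_subset_support hy hz)⟩
  exact ⟨p.induce _ hsupp⟩

lemma sum_card_filter_adj_comm [DecidableRel G.Adj] (P Q : Finset V) :
    ∑ x ∈ P, #{y ∈ Q | G.Adj x y} = ∑ y ∈ Q, #{x ∈ P | G.Adj y x} := by
  have := sum_card_bipartiteAbove_eq_sum_card_bipartiteBelow (s := P) (t := Q) (r := G.Adj)
  simpa only [bipartiteAbove, bipartiteBelow, G.adj_comm] using this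

lemma card_filter_adj_add_card_le_degree [G.LocallyFinite] [DecidableRel G.Adj] [DecidableEq V]
    {s : V} {P Q : Finset V} (hP : ∀ p ∈ P, G.Adj s p) (hPQ : Disjoint P Q) :
    #{y ∈ Q | G.Adj s y} + #P ≤ G.degree s := by
  rw [← card_neighborFinset_eq_degree, add_comm,
    ← card_union_of_disjoint (hPQ.mono_right (filter_subset _ _))]
  refine card_le_card (union_subset (fun p hp => ?_) fun y hy => ?_)
  · exact (G.mem_neighborFinset s p).mpr (hP p hp)
  · exact (G.mem_neighborFinset s y).mpr (mem_filter.mp hy).2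

theorem IsRegularOfDegree.mul_card_eq_mul_card_add_sum_card_filter_adj [G.LocallyFinite]
    [DecidableRel G.Adj] [DecidableEq V] {d : ℕ} (hreg : G.IsRegularOfDegree d)
    {A B T : Finset V} (hBT : Disjoint B T) (hB : ∀ y ∈ B, ∀ z, G.Adj y z → z ∈ A)
    (hA : ∀ x ∈ A, ∀ z, G.Adj x z → z ∈ B ∪ T) :
    d * #A = d * #B + ∑ t ∈ T, #{x ∈ A | G.Adj t x} := by
  have hdegB : ∀ y ∈ B, #{x ∈ A | G.Adj y x} = d := fun y hy => by
    rw [← hreg y, ← card_neighborFinset_eq_degree]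
    congr 1
    ext z
    simpa only [mem_filter, mem_neighborFinset, and_iff_right_iff_imp] using hB y hy z
  have hdegA : ∀ x ∈ A, #{y ∈ B | G.Adj x y} + #{t ∈ T | G.Adj x t} = d := fun x hx => by
    have hnbr : G.neighborFinset x = {y ∈ B ∪ T | G.Adj x y} := by
      ext z
      simpa only [mem_filter, mem_neighborFinset, iff_and_self] using hA x hx z
    rw [← hreg x, ← card_neighborFinset_eq_degree, hnbr, filter_union,
      card_union_of_disjoint (disjoint_filter_filter hBT)]
  calc d * #A = ∑ x ∈ A, (#{y ∈ B | G.Adj x y} + #{t ∈ T | G.Adj x t}) := by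
        rw [sum_congr rfl hdegA, sum_const, smul_eq_mul, mul_comm]
    _ = ∑ y ∈ B, #{x ∈ A | G.Adj y x} + ∑ t ∈ T, #{x ∈ A | G.Adj t x} := by
        rw [sum_add_distrib, sum_card_filter_adj_comm, sum_card_filter_adj_comm A T]
    _ = d * #B + ∑ t ∈ T, #{x ∈ A | G.Adj t x} := by
        rw [sum_congr rfl hdegB, sum_const, smul_eq_mul, mul_comm]

theorem IsRegularOfDegree.dvd_sum_card_filter_adj [G.LocallyFinite] [DecidableRel G.Adj]
    {d : ℕ} (hreg : G.IsRegularOfDegree d) (col : G.Coloring (Fin 2)) {k : Fin 2}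
    {W T : Finset V} (hWT : Disjoint W T) (hT : ∀ t ∈ T, col t ≠ k)
    (hcut : ∀ x ∈ W, ∀ y, G.Adj x y → y ∉ W → y ∈ T) :
    d ∣ ∑ t ∈ T, #{x ∈ W | G.Adj t x} := by
  classical
  have hcol {x y : V} (hxy : G.Adj x y) (hy : col y ≠ k) : col x = k := by
    have := col.valid hxy
    omega
  have hTW : ∀ t ∈ T, #{x ∈ W | G.Adj t x} = #{x ∈ {x ∈ W | col x = k} | G.Adj t x} := by
    intro t ht
    congr 1
    ext x
    simp only [mem_filter]
    exact ⟨fun ⟨hxW, htx⟩ => ⟨⟨hxW, hcol htx.symm (hT t ht)⟩, htx⟩, fun h => ⟨h.1.1, h.2⟩⟩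
  have hcount := hreg.mul_card_eq_mul_card_add_sum_card_filter_adj (A := {x ∈ W | col x = k})
    (B := {x ∈ W | col x ≠ k}) (hWT.mono_left (filter_subset _ _))
    (fun y hy z hyz => ?_) (fun x hx z hxz => ?_)
  · rw [← sum_congr rfl hTW] at hcount
    exact (Nat.dvd_add_right (dvd_mul_right d _)).mp (hcount ▸ dvd_mul_right d _)
  · obtain ⟨hyW, hyk⟩ := mem_filter.mp hy
    have hzk := hcol hyz.symm hyk
    exact mem_filter.mpr ⟨by_contra fun hzW => hT z (hcut y hyW z hyz hzW) hzk, hzk⟩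
  · obtain ⟨hxW, hxk⟩ := mem_filter.mp hx
    by_cases hzW : z ∈ W
    · exact mem_union_left _ (mem_filter.mpr ⟨hzW, hxk ▸ (col.valid hxz).symm⟩)
    · exact mem_union_right _ (hcut x hxW z hxz hzW)

lemma isRegularOfDegree_of_ncard_neighborSet [G.LocallyFinite] {d : ℕ}
    (h : ∀ v, (G.neighborSet v).ncard = d) : G.IsRegularOfDegree d := fun v => by
  rw [← card_neighborSet_eq_degree, ← Nat.card_eq_fintype_card, Nat.card_coe_set_eq, h]

variable {u v : V}

lemma exists_adj_notMem_pair_union_neighborSet [G.LocallyFinite] (col : G.Coloring (Fin 2))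
    {a : V} (hua : G.Adj u a) (hdeg : 2 < G.degree a) :
    ∃ x, G.Adj a x ∧ x ∉ {u, v} ∪ G.neighborSet u := by
  classical
  obtain ⟨x, hax, hxuv⟩ := exists_mem_notMem_of_card_lt_card (s := {u, v})
    (t := G.neighborFinset a)
    (by rw [card_neighborFinset_eq_degree]; exact card_le_two.trans_lt hdeg)
  rw [mem_neighborFinset] at hax
  refine ⟨x, hax, ?_⟩
  have hcol_ax := col.valid hax
  have hcol_ua := col.valid hua
  simp only [Set.mem_union, mem_neighborSet, not_or]
  exact ⟨by simpa using hxuv, fun hux => col.valid hux (by omega)⟩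

lemma mem_neighborSet_of_adj_of_mem_componentAvoiding (htwin : G.neighborSet u = G.neighborSet v)
    {w y : V} (hw : w ∈ G.componentAvoiding ({u, v} ∪ G.neighborSet u) x) (hwy : G.Adj w y)
    (hy : y ∉ G.componentAvoiding ({u, v} ∪ G.neighborSet u) x) : y ∈ G.neighborSet u := by
  have hwS := notMem_of_mem_componentAvoiding hw
  rcases not_not.mp fun hyS => hy (mem_componentAvoiding_of_adj hw hwy hyS) with
    (rfl | rfl) | hyN
  · exact absurd (Or.inr hwy.symm) hwS
  · exact absurd (Or.inr (htwin ▸ hwy.symm)) hwS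
  · exact hyN

theorem forall_exists_adj_componentAvoiding_of_twins [Fintype V] [DecidableRel G.Adj]
    (hreg : G.IsRegularOfDegree 3) (col : G.Coloring (Fin 2)) (huv : u ≠ v)
    (htwin : G.neighborSet u = G.neighborSet v) {a x : V} (hua : G.Adj u a) (hax : G.Adj a x)
    (hx : x ∉ {u, v} ∪ G.neighborSet u) :
    ∀ t, G.Adj u t → ∃ w ∈ G.componentAvoiding ({u, v} ∪ G.neighborSet u) x, G.Adj w t := by
  classical
  set W := G.componentAvoiding ({u, v} ∪ G.neighborSet u) x
  set N := G.neighborFinset u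
  have hmem_u : ∀ t, t ∈ N ↔ G.Adj u t := G.mem_neighborFinset u
  have hmem_v : ∀ t, t ∈ N ↔ G.Adj v t := fun t => by
    rw [hmem_u, ← mem_neighborSet, htwin, mem_neighborSet]
  have hWS : ∀ w ∈ W.toFinset, w ∉ ({u, v} ∪ G.neighborSet u : Set V) := fun _ hw =>
    notMem_of_mem_componentAvoiding (Set.mem_toFinset.mp hw)
  have hdvd : #N ∣ ∑ t ∈ N, #{w ∈ W.toFinset | G.Adj t w} := by
    rw [card_neighborFinset_eq_degree, hreg u]
    refine hreg.dvd_sum_card_filter_adj col (k := col u)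
      (Finset.disjoint_left.mpr fun t ht htN => hWS t ht (Or.inr ((hmem_u t).mp htN)))
      (fun t ht => (col.valid ((hmem_u t).mp ht)).symm) fun w hw y hwy hy => ?_
    rw [Set.mem_toFinset] at hw hy
    exact (hmem_u y).mpr (mem_neighborSet_of_adj_of_mem_componentAvoiding htwin hw hwy hy)
  have hle : ∀ t ∈ N, #{w ∈ W.toFinset | G.Adj t w} ≤ 1 := by
    intro t ht
    have := card_filter_adj_add_card_le_degree (P := {u, v}) (Q := W.toFinset) (s := t)
      (by simpa using ⟨((hmem_u t).mp ht).symm, ((hmem_v t).mp ht).symm⟩)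
      (Finset.disjoint_left.mpr fun w hw hwW => hWS w hwW (Or.inl (by simpa using hw)))
    rw [card_pair huv, hreg t] at this
    omega
  have ha_ne : #{w ∈ W.toFinset | G.Adj a w} ≠ 0 :=
    (card_pos.mpr ⟨x, mem_filter.mpr
      ⟨Set.mem_toFinset.mpr (mem_componentAvoiding_self hx), hax⟩⟩).ne'
  intro t ht
  obtain ⟨w, hw⟩ := card_pos.mp
    (Finset.eq_one_of_card_dvd_sum hle hdvd ((hmem_u a).mpr hua) ha_ne t ((hmem_u t).mpr ht)).ge
  obtain ⟨hwW, htw⟩ := mem_filter.mp hw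
  exact ⟨w, Set.mem_toFinset.mp hwW, htw.symm⟩

end SimpleGraph

theorem hasMinor_K33_of_forall_adj {V : Type*} {G : SimpleGraph V} {T : Finset V} (hT : #T = 3)
    {u v : V} (huv : u ≠ v) (hu : ∀ t ∈ T, G.Adj u t) (hv : ∀ t ∈ T, G.Adj v t)
    {W : Set V} (hW : (G.induce W).Connected) (hWu : u ∉ W) (hWv : v ∉ W)
    (hWT : ∀ t ∈ T, t ∉ W) (hWadj : ∀ t ∈ T, ∃ x ∈ W, G.Adj x t) :
    HasMinor G (completeBipartiteGraph (Fin 3) (Fin 3)) := by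
  let e : Fin 3 ≃ T := (Fintype.equivFinOfCardEq (by rw [Fintype.card_coe, hT])).symm
  refine ⟨Sum.elim ![{u}, {v}, W] (fun j => {(e j : V)}), ?_, ?_, ?_, ?_⟩
  · rintro (i | j)
    · fin_cases i <;> simp [Set.nonempty_coe_sort.mp hW.nonempty]
    · simp
  · rintro (i | j)
    · fin_cases i <;> simp [hW]
    · simp
  · rintro (i | i) (j | j) hij
    · fin_cases i <;> fin_cases j <;> simp_all [eq_comm]
    · have := hWT _ (e j).2
      fin_cases i <;> simp [*, (hu _ (e j).2).ne, (hv _ (e j).2).ne]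
    · have := hWT _ (e i).2
      fin_cases j <;> simp [*, (hu _ (e i).2).ne', (hv _ (e i).2).ne']
    · simpa [Subtype.val_inj, e.injective.eq_iff] using hij
  · rintro (i | i) (j | j) hij
    · simp at hij
    · fin_cases i
      · exact ⟨u, rfl, _, rfl, hu _ (e j).2⟩
      · exact ⟨v, rfl, _, rfl, hv _ (e j).2⟩
      · simpa using hWadj _ (e j).2
    · fin_cases j
      · exact ⟨_, rfl, u, rfl, (hu _ (e i).2).symm⟩
      · exact ⟨_, rfl, v, rfl, (hv _ (e i).2).symm⟩
      · simpa [G.adj_comm] using hWadj _ (e i).2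
    · simp at hij

theorem hasMinor_K33_of_twins {V : Type*} [Fintype V] {G : SimpleGraph V} [DecidableRel G.Adj]
    (hreg : G.IsRegularOfDegree 3) (col : G.Coloring (Fin 2)) {u v : V} (huv : u ≠ v)
    (htwin : G.neighborSet u = G.neighborSet v) :
    HasMinor G (completeBipartiteGraph (Fin 3) (Fin 3)) := by
  classical
  have hmem_u (t : V) : t ∈ G.neighborFinset u ↔ G.Adj u t := G.mem_neighborFinset u t
  have hmem_v (t : V) : t ∈ G.neighborFinset u ↔ G.Adj v t := by
    rw [hmem_u, ← mem_neighborSet, htwin, mem_neighborSet]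
  obtain ⟨a, ha⟩ : (G.neighborFinset u).Nonempty :=
    card_pos.mp (by rw [card_neighborFinset_eq_degree, hreg u]; norm_num)
  rw [hmem_u] at ha
  set S : Set V := {u, v} ∪ G.neighborSet u
  obtain ⟨x, hax, hx⟩ :=
    exists_adj_notMem_pair_union_neighborSet (v := v) col ha (by rw [hreg a]; norm_num)
  have hWS : ∀ w ∈ G.componentAvoiding S x, w ∉ S := fun _ => notMem_of_mem_componentAvoiding
  exact hasMinor_K33_of_forall_adj (hreg u) huv (fun t => (hmem_u t).mp)
    (fun t => (hmem_v t).mp) (connected_induce_componentAvoiding hx)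
    (fun h => hWS u h (by simp [S])) (fun h => hWS v h (by simp [S]))
    (fun t ht h => hWS t h (Or.inr ((hmem_u t).mp ht)))
    fun t ht => forall_exists_adj_componentAvoiding_of_twins hreg col huv htwin ha hax hx t
      ((hmem_u t).mp ht)

/-- a cubic bipartite graph with a pair of distinct vertices having
identical neighbourhoods is non-planar. -/
theorem cubic_bipartite_twins_nonplanar {V : Type*} [Fintype V] (G : SimpleGraph V)
    (hcubic : ∀ v : V, (G.neighborSet v).ncard = 3) (hbip : G.Colorable 2)
    (u v : V) (huv : u ≠ v) (htwin : G.neighborSet u = G.neighborSet v) :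
    ¬ PlanarG G := by
  classical
  obtain ⟨col⟩ := hbip
  exact fun hplanar => hplanar.2 <|
    hasMinor_K33_of_twins (isRegularOfDegree_of_ncard_neighborSet hcubic) col huv htwin
end
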